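/- arXiv:1502.07441 — 2 statements merged into one kernel-verified Lean document; each statement's English description precedes it below -/
import Mathlib

section
/- Every derived nilpotent Lie algebra in an additive symmetric monoidal category is solvable. More precisely, ℓ^(3) = ℓ⟨2⟩ ∘ ℓ^⊗2, and for n > 3 one has ℓ^(n+1) = ℓ⟨n⟩ ∘ ℓ^⊗n ∘ (ℓ^(n-1) ⊗ ℓ^(n-1) ⊗ ℓ^(n-2) ⊗ ℓ^(n-2) ⊗ ⋯ ⊗ ℓ ⊗ ℓ ⊗ id_L^⊗4); hence ℓ⟨n⟩ ∘ ℓ^⊗n = 0 implies ℓ^(n+1) = 0. -/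
open CategoryTheory MonoidalCategory

variable {C : Type*} [Category C] [MonoidalCategory C]

/-- `npow L n` is the `(n+1)`-fold tensor power `L^⊗(n+1)`. -/
def npow (L : C) : ℕ → C
  | 0 => L
  | n + 1 => L ⊗ npow L n

/-- Iterated bracket: `iterBracket ℓ n = ℓ⟨n+2⟩ : L^⊗(n+2) ⟶ L`. -/
def iterBracket {L : C} (ℓ : L ⊗ L ⟶ L) : (n : ℕ) → (npow L (n + 1) ⟶ L)
  | 0 => ℓ
  | n + 1 => (L ◁ iterBracket ℓ n) ≫ ℓ

/-- Domain of the derived morphism `ℓ^(n+2)`. -/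
def Dpow (L : C) : ℕ → C
  | 0 => L ⊗ L
  | n + 1 => Dpow L n ⊗ Dpow L n

/-- Derived morphisms: `derived ℓ n = ℓ^(n+2)`. -/
def derived {L : C} (ℓ : L ⊗ L ⟶ L) : (n : ℕ) → (Dpow L n ⟶ L)
  | 0 => ℓ
  | n + 1 => (derived ℓ n ⊗ₘ derived ℓ n) ≫ ℓ

/-- `tpow ℓ n = ℓ^{⊗(n+1)} : (L⊗L)^{⊗(n+1)} ⟶ L^{⊗(n+1)}`. -/
def tpow {L : C} (ℓ : L ⊗ L ⟶ L) : (n : ℕ) → (npow (L ⊗ L) n ⟶ npow L n)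
  | 0 => ℓ
  | n + 1 => ℓ ⊗ₘ tpow ℓ n

/-
Write `ℓ^(n+2) = ℓ ∘ (ℓ^(n+1) ⊗ ℓ^(n+1))`, expand the right factor recursively as
`ℓ⟨n⟩ ∘ ℓ^{⊗n} ∘ (…)` and the left one only once, as `ℓ ∘ (ℓ^(n) ⊗ ℓ^(n))`. The interchange
law regroups the two outer brackets into `ℓ⟨n+1⟩ ∘ ℓ^{⊗(n+1)}`, so every `ℓ^(n+1)` factors
through `ℓ⟨n⟩ ∘ ℓ^{⊗n}` and vanishes as soon as the latter does.
-/

section Factorization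

variable {L : C} (ℓ : L ⊗ L ⟶ L)

/-- The paper's `ℓ^(k+1) ⊗ ℓ^(k+1) ⊗ ℓ^(k) ⊗ ℓ^(k) ⊗ ⋯ ⊗ ℓ ⊗ ℓ ⊗ id_L^{⊗4}`. -/
def derivedFactor : (k : ℕ) → (Dpow L (k + 1) ⟶ npow (L ⊗ L) (k + 1))
  | 0 => 𝟙 _
  | k + 1 => (derived ℓ k ⊗ₘ derived ℓ k) ⊗ₘ derivedFactor k

theorem tpow_comp_iterBracket_succ (k : ℕ) :
    tpow ℓ (k + 2) ≫ iterBracket ℓ (k + 1) =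
      (ℓ ⊗ₘ (tpow ℓ (k + 1) ≫ iterBracket ℓ k)) ≫ ℓ :=
  tensorHom_comp_whiskerLeft_assoc _ _ _ _

theorem derived_succ_eq (k : ℕ) :
    derived ℓ (k + 1) = derivedFactor ℓ k ≫ tpow ℓ (k + 1) ≫ iterBracket ℓ k := by
  induction k with
  | zero => exact (Category.id_comp _).symm
  | succ k ih =>
    rw [tpow_comp_iterBracket_succ, derivedFactor]
    erw [tensorHom_comp_tensorHom_assoc, ← ih]
    rfl

end Factorization

theorem derived_nilpotent_implies_solvable_general {C : Type*} [Category C] [MonoidalCategory C]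
    [Preadditive C]
    (L : C) (ℓ : L ⊗ L ⟶ L) :
    derived ℓ 1 = tpow ℓ 1 ≫ iterBracket ℓ 0 ∧
    ((∃ N, ∀ n ≥ N, tpow ℓ (n + 1) ≫ iterBracket ℓ n = 0) →
      ∃ M, ∀ m ≥ M, derived ℓ m = 0) := by
  refine ⟨derived_succ_eq ℓ 0 |>.trans (Category.id_comp _), ?_⟩
  rintro ⟨N, hN⟩
  refine ⟨N + 1, fun m hm => ?_⟩
  obtain ⟨k, rfl⟩ : ∃ k, m = k + 1 := ⟨m - 1, by omega⟩
  rw [derived_succ_eq, hN k (by omega), Limits.comp_zero]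

/-- Every derived nilpotent Lie algebra in an additive symmetric monoidal
category is solvable.  More precisely `ℓ^(3) = ℓ⟨2⟩ ∘ ℓ^{⊗2}`, and
`ℓ⟨n⟩ ∘ ℓ^{⊗n} = 0` for sufficiently large `n` implies `ℓ^(m) = 0` for sufficiently
large `m`. -/
theorem derived_nilpotent_implies_solvable {C : Type*} [Category C] [MonoidalCategory C]
    [Preadditive C] [SymmetricCategory C] [MonoidalPreadditive C]
    (L : C) (ℓ : L ⊗ L ⟶ L)
    (hanti : (𝟙 (L ⊗ L) + (β_ L L).hom) ≫ ℓ = 0)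
    (hjac : (𝟙 (L ⊗ (L ⊗ L)) + ((α_ L L L).inv ≫ (β_ (L ⊗ L) L).hom)
        + ((α_ L L L).inv ≫ (β_ (L ⊗ L) L).hom) ≫ ((α_ L L L).inv ≫ (β_ (L ⊗ L) L).hom))
        ≫ ((L ◁ ℓ) ≫ ℓ) = 0) :
    derived ℓ 1 = tpow ℓ 1 ≫ iterBracket ℓ 0 ∧
    ((∃ N, ∀ n ≥ N, tpow ℓ (n + 1) ≫ iterBracket ℓ n = 0) →
      ∃ M, ∀ m ≥ M, derived ℓ m = 0) :=
  derived_nilpotent_implies_solvable_general L ℓ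
end

section
/- Partial traces in a ribbon category are cyclic up to braidings and twists: for f : U ⊗ X → Y and g : V ⊗ Y → X, one has tr₃(f ∘ (id_U ⊗ g)) = tr₃(g ∘ (id_V ⊗ f) ∘ ((c_{U,V} ∘ (θ_U ⊗ id_V)) ⊗ id_X)), where tr₃ denotes the partial trace over the last tensor factor. -/
open CategoryTheory MonoidalCategory BraidedCategory

variable {C : Type*} [Category C] [MonoidalCategory C] [BraidedCategory C] [RigidCategory C]

/-- The sovereign structure `σ_U : U^∨ ⟶ ^∨U` induced by a twist `θ`. -/
def sovereignOfTwist (θ : ∀ X : C, X ⟶ X) (U : C) : Uᘁ ⟶ ᘁU :=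
  (ρ_ (Uᘁ)).inv ≫ ((Uᘁ) ◁ η_ (ᘁU) U) ≫ (α_ (Uᘁ) (ᘁU) U).inv
    ≫ ((β_ (ᘁU) (Uᘁ)).inv ▷ U) ≫ (α_ (ᘁU) (Uᘁ) U).hom
    ≫ ((ᘁU) ◁ ((Uᘁ) ◁ θ U)) ≫ ((ᘁU) ◁ ε_ U (Uᘁ)) ≫ (ρ_ (ᘁU)).hom

/-- Partial trace over the last tensor factor of `f : X ⊗ V ⟶ V`. -/
def partialTrace (θ : ∀ X : C, X ⟶ X) {X V : C} (f : X ⊗ V ⟶ V) : X ⟶ 𝟙_ C :=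
  (ρ_ X).inv ≫ (X ◁ η_ V (Vᘁ)) ≫ (α_ X V (Vᘁ)).inv ≫ (f ▷ (Vᘁ))
    ≫ (V ◁ sovereignOfTwist θ V) ≫ ε_ (ᘁV) V

/-!
Through the twist, the sovereign evaluation `V ⊗ Vᘁ ⟶ 𝟙` becomes `(θ_V ⊗ 1) ≫ β ≫ ε`, so
`tr₃ h` is the trace of `h ≫ θ` closed up with the braided evaluation `β ≫ ε`. For this
braided trace, maps without spectator strands slide around the loop, so `θ_X` can be moved
onto the input of `f`; there `θ_{U ⊗ X} = β β (θ_U ⊗ θ_X)` and naturality of `θ` turn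
`θ_U ⊗ θ_X` into `θ_Y` after `f`, up to the monodromy `β_{U,X} β_{X,U}`. What is left is
twist-free: passing `f` around the loop by means of its partial mate `Yᘁ ⊗ U ⟶ Xᘁ` makes its
spectator strand `U` wind once around the loop strand, and that winding is the monodromy.
-/

open BraidedCategory

section Braided

variable {D : Type*} [Category D] [MonoidalCategory D] [BraidedCategory D]

lemma whiskerLeft_braiding_inv_comp_cap {A B E : D} (e : A ⊗ B ⟶ 𝟙_ D) :
    A ◁ (β_ B E).inv ≫ (α_ A B E).inv ≫ e ▷ E ≫ (λ_ E).hom =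
      (α_ A E B).inv ≫ (β_ A E).hom ▷ B ≫ (α_ E A B).hom ≫ E ◁ e ≫ (ρ_ E).hom := by
  have h := braiding_naturality_left e E
  rw [braiding_tensorUnit_left, braiding_tensor_left_hom] at h
  rw [← cancel_mono (ρ_ E).inv]
  simp only [Category.assoc, Iso.hom_inv_id, Category.comp_id] at h ⊢
  rw [h]
  simp

/-- Once `B`, half of a pair created to the right of `U ⊗ V`, has crossed to the far left, a full
turn of `U` around `V ⊗ A` amounts to having crossed `U` past `V` beforehand. -/
lemma whiskerLeft_braiding_comp_monodromy {A B : D} (e : 𝟙_ D ⟶ A ⊗ B) (U V : D) :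
    (𝟙 _ ⊗≫ (U ⊗ V) ◁ e ⊗≫ (β_ (U ⊗ V ⊗ A) B).hom ⊗≫
        B ◁ ((β_ U (V ⊗ A)).hom ≫ (β_ (V ⊗ A) U).hom) : U ⊗ V ⟶ B ⊗ U ⊗ V ⊗ A) =
      (β_ U V).hom ⊗≫ (V ◁ e) ▷ U ⊗≫ (β_ (V ⊗ A) (B ⊗ U)).hom ⊗≫ 𝟙 _ := by
  set k : V ⟶ B ⊗ V ⊗ A := (ρ_ V).inv ≫ V ◁ e ≫ (α_ V A B).inv ≫ (β_ (V ⊗ A) B).hom with hk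
  calc _ = 𝟙 _ ⊗≫ (U ◁ k ≫ (β_ U (B ⊗ V ⊗ A)).hom) ⊗≫ B ◁ (β_ (V ⊗ A) U).hom ⊗≫ 𝟙 _ := by
        rw [braiding_tensor_left_hom U (V ⊗ A) B, braiding_tensor_right_hom U B (V ⊗ A), hk]
        monoidal
    _ = 𝟙 _ ⊗≫ ((β_ U V).hom ≫ k ▷ U) ⊗≫ B ◁ (β_ (V ⊗ A) U).hom ⊗≫ 𝟙 _ := by
        rw [braiding_naturality_right]
    _ = _ := by
        rw [braiding_tensor_right_hom (V ⊗ A) B U, hk]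
        monoidal

end Braided

section Mate

variable {D : Type*} [Category D] [MonoidalCategory D]

def partialRightMate {U X X' Y Y' : D} [ExactPairing X X'] [ExactPairing Y Y']
    (f : U ⊗ X ⟶ Y) : Y' ⊗ U ⟶ X' :=
  (tensorLeftHomEquiv U Y Y' X').symm (tensorRightHomEquiv U X X' Y f)

variable {U X X' Y Y' : D} [ExactPairing X X'] [ExactPairing Y Y']

lemma coevaluation_comp_partialRightMate (f : U ⊗ X ⟶ Y) :
    (λ_ U).inv ≫ η_ Y Y' ▷ U ≫ (α_ Y Y' U).hom ≫ Y ◁ partialRightMate f =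
      (ρ_ U).inv ≫ U ◁ η_ X X' ≫ (α_ U X X').inv ≫ f ▷ X' :=
  (tensorLeftHomEquiv U Y Y' X').apply_symm_apply _

lemma partialRightMate_comp_evaluation (f : U ⊗ X ⟶ Y) :
    partialRightMate f ▷ X ≫ ε_ X X' = (α_ Y' U X).hom ≫ Y' ◁ f ≫ ε_ Y Y' := by
  have h : tensorRightHomEquiv _ X X' _ ((α_ Y' U X).hom ≫ Y' ◁ f ≫ ε_ Y Y') =
      partialRightMate f ≫ (λ_ X').inv := by
    simp only [partialRightMate, tensorLeftHomEquiv, tensorRightHomEquiv, Equiv.coe_fn_mk,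
      Equiv.coe_fn_symm_mk]
    monoidal
  rw [← (tensorRightHomEquiv _ X X' _).symm_apply_apply ((α_ Y' U X).hom ≫ Y' ◁ f ≫ ε_ Y Y'), h]
  simp only [tensorRightHomEquiv, Equiv.coe_fn_symm_mk]
  monoidal

end Mate

lemma whiskerLeft_sovereignOfTwist_comp_evaluation (θ : ∀ X : C, X ⟶ X) (V : C) :
    V ◁ sovereignOfTwist θ V ≫ ε_ (ᘁV) V = θ V ▷ (Vᘁ) ≫ (β_ V (Vᘁ)).hom ≫ ε_ V (Vᘁ) := by
  set k := (Vᘁ) ◁ θ V ≫ ε_ V (Vᘁ)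
  calc _ = 𝟙 _ ⊗≫ V ◁ (Vᘁ) ◁ η_ (ᘁV) V ⊗≫ V ◁ (β_ (ᘁV) (Vᘁ)).inv ▷ V
          ⊗≫ ((V ⊗ (ᘁV)) ◁ k ≫ ε_ (ᘁV) V ▷ 𝟙_ C) ⊗≫ 𝟙 _ := by
        simp only [k, sovereignOfTwist, whiskerLeft_comp]; monoidal
    _ = 𝟙 _ ⊗≫ V ◁ (Vᘁ) ◁ η_ (ᘁV) V
          ⊗≫ (V ◁ (β_ (ᘁV) (Vᘁ)).inv ≫ (α_ V (ᘁV) (Vᘁ)).inv ≫ ε_ (ᘁV) V ▷ (Vᘁ) ≫ (λ_ (Vᘁ)).hom) ▷ V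
          ⊗≫ k := by
        rw [whisker_exchange]; monoidal
    _ = 𝟙 _ ⊗≫ ((V ⊗ (Vᘁ)) ◁ η_ (ᘁV) V ≫ (β_ V (Vᘁ)).hom ▷ ((ᘁV) ⊗ V))
          ⊗≫ (Vᘁ : C) ◁ (ε_ (ᘁV : C) V ▷ V) ⊗≫ k := by
        rw [whiskerLeft_braiding_inv_comp_cap]; monoidal
    _ = (β_ V (Vᘁ)).hom ⊗≫ (Vᘁ) ◁ (V ◁ η_ (ᘁV) V ⊗≫ ε_ (ᘁV) V ▷ V) ⊗≫ k := by
        rw [whisker_exchange]; monoidal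
    _ = (β_ V (Vᘁ)).hom ≫ k := by
        rw [ExactPairing.coevaluation_evaluation'']; monoidal
    _ = _ := (braiding_naturality_left_assoc _ _ _).symm

def braidedTrace {Z W : C} (h : Z ⊗ W ⟶ W) : Z ⟶ 𝟙_ C :=
  (ρ_ Z).inv ≫ Z ◁ η_ W (Wᘁ) ≫ (α_ Z W (Wᘁ)).inv ≫ h ▷ (Wᘁ) ≫ (β_ W (Wᘁ)).hom ≫ ε_ W (Wᘁ)

lemma partialTrace_eq_braidedTrace (θ : ∀ X : C, X ⟶ X) {Z W : C} (h : Z ⊗ W ⟶ W) :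
    partialTrace θ h = braidedTrace (h ≫ θ W) := by
  simp [partialTrace, braidedTrace, whiskerLeft_sovereignOfTwist_comp_evaluation]

lemma braidedTrace_comp_comm {Z A B : C} (h : Z ⊗ A ⟶ B) (k : B ⟶ A) :
    braidedTrace (h ≫ k) = braidedTrace (Z ◁ k ≫ h) := by
  calc braidedTrace (h ≫ k)
      = 𝟙 _ ⊗≫ Z ◁ η_ A (Aᘁ) ⊗≫ h ▷ (Aᘁ) ⊗≫ (β_ B (Aᘁ)).hom ≫ (Aᘁ) ◁ k ≫ ε_ A (Aᘁ) := by
        simp only [braidedTrace, comp_whiskerRight, Category.assoc]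
        rw [braiding_naturality_left_assoc]
        monoidal
    _ = 𝟙 _ ⊗≫ Z ◁ η_ A (Aᘁ) ⊗≫ (h ▷ (Aᘁ) ≫ B ◁ kᘁ) ⊗≫ (β_ B (Bᘁ)).hom ≫ ε_ B (Bᘁ) := by
        rw [← rightAdjointMate_comp_evaluation, ← braiding_naturality_right_assoc]; monoidal
    _ = 𝟙 _ ⊗≫ Z ◁ (η_ A (Aᘁ) ≫ A ◁ kᘁ) ⊗≫ h ▷ (Bᘁ) ⊗≫ (β_ B (Bᘁ)).hom ≫ ε_ B (Bᘁ) := by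
        rw [← whisker_exchange]; monoidal
    _ = braidedTrace (Z ◁ k ≫ h) := by
        rw [coevaluation_comp_rightAdjointMate]
        simp only [braidedTrace, comp_whiskerRight, whiskerLeft_comp]
        monoidal

lemma braidedTrace_cyclic {U V X Y : C} (f : U ⊗ X ⟶ Y) (g : V ⊗ Y ⟶ X) :
    braidedTrace ((α_ U V Y).hom ≫ U ◁ g ≫ (β_ U X).hom ≫ (β_ X U).hom ≫ f) =
      braidedTrace ((β_ U V).hom ▷ X ≫ (α_ V U X).hom ≫ V ◁ f ≫ g) := by
  set fm : (Yᘁ) ⊗ U ⟶ Xᘁ := partialRightMate f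
  calc _ = braidedTrace ((α_ U V Y).hom ≫ (β_ U (V ⊗ Y)).hom ≫ (β_ (V ⊗ Y) U).hom ≫ U ◁ g ≫ f) := by
        rw [braiding_naturality_right_assoc, braiding_naturality_left_assoc]
    _ = 𝟙 _ ⊗≫ (U ⊗ V) ◁ η_ Y (Yᘁ) ⊗≫ (β_ (U ⊗ V ⊗ Y) (Yᘁ)).hom
          ⊗≫ (Yᘁ) ◁ ((β_ U (V ⊗ Y)).hom ≫ (β_ (V ⊗ Y) U).hom) ⊗≫ (Yᘁ) ◁ U ◁ g
          ⊗≫ ((α_ (Yᘁ) U X).hom ≫ (Yᘁ) ◁ f ≫ ε_ Y (Yᘁ)) := by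
        simp only [braidedTrace, comp_whiskerRight, Category.assoc]
        rw [braiding_naturality_left_assoc, braiding_naturality_left_assoc,
          braiding_naturality_left_assoc, braiding_naturality_left_assoc]
        monoidal
    _ = (𝟙 _ ⊗≫ (U ⊗ V) ◁ η_ Y (Yᘁ) ⊗≫ (β_ (U ⊗ V ⊗ Y) (Yᘁ)).hom
          ⊗≫ (Yᘁ) ◁ ((β_ U (V ⊗ Y)).hom ≫ (β_ (V ⊗ Y) U).hom))
          ⊗≫ (((Yᘁ : C) ⊗ U) ◁ g ≫ fm ▷ X) ⊗≫ ε_ X (Xᘁ) := by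
        rw [← partialRightMate_comp_evaluation (X' := Xᘁ) (Y' := Yᘁ)]; monoidal
    _ = (β_ U V).hom ⊗≫ (V ◁ η_ Y (Yᘁ)) ▷ U
          ⊗≫ ((β_ (V ⊗ Y) ((Yᘁ) ⊗ U)).hom ≫ fm ▷ (V ⊗ Y)) ⊗≫ (Xᘁ) ◁ g ⊗≫ ε_ X (Xᘁ) := by
        rw [whiskerLeft_braiding_comp_monodromy, whisker_exchange]; monoidal
    _ = (β_ U V).hom ⊗≫ V ◁ ((λ_ U).inv ≫ η_ Y (Yᘁ) ▷ U ≫ (α_ Y (Yᘁ) U).hom ≫ Y ◁ fm)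
          ⊗≫ (β_ (V ⊗ Y) (Xᘁ)).hom ⊗≫ (Xᘁ) ◁ g ⊗≫ ε_ X (Xᘁ) := by
        rw [← braiding_naturality_right]; monoidal
    _ = (β_ U V).hom ⊗≫ V ◁ ((ρ_ U).inv ≫ U ◁ η_ X (Xᘁ) ≫ (α_ U X (Xᘁ)).inv ≫ f ▷ (Xᘁ))
          ⊗≫ (β_ (V ⊗ Y) (Xᘁ)).hom ⊗≫ (Xᘁ) ◁ g ⊗≫ ε_ X (Xᘁ) := by
        rw [coevaluation_comp_partialRightMate (X' := Xᘁ) (Y' := Yᘁ)]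
    _ = _ := by
        simp only [braidedTrace, comp_whiskerRight, Category.assoc]
        rw [braiding_naturality_left_assoc, ← associator_inv_naturality_left_assoc,
          whisker_exchange_assoc, ← rightUnitor_inv_naturality_assoc]
        monoidal

theorem partialTrace_cyclic_general (θ : ∀ X : C, X ⟶ X)
    (hθnat : ∀ {X Y : C} (g : X ⟶ Y), g ≫ θ Y = θ X ≫ g)
    (hθtensor : ∀ X Y : C, θ (X ⊗ Y) = (β_ X Y).hom ≫ (β_ Y X).hom ≫ (θ X ⊗ₘ θ Y))
    (U V X Y : C) (f : U ⊗ X ⟶ Y) (g : V ⊗ Y ⟶ X) :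
    partialTrace θ ((α_ U V Y).hom ≫ (U ◁ g) ≫ f) =
    partialTrace θ ((((θ U ▷ V) ≫ (β_ U V).hom) ▷ X) ≫ (α_ V U X).hom ≫ (V ◁ f) ≫ g) := by
  have hf : f ≫ θ Y = (β_ U X).hom ≫ (β_ X U).hom ≫ (θ U ⊗ₘ θ X) ≫ f := by
    rw [hθnat, hθtensor]; simp only [Category.assoc]
  calc _ = braidedTrace ((α_ U V Y).hom ≫ U ◁ g ≫ (β_ U X).hom ≫ (β_ X U).hom ≫
          (θ U ⊗ₘ θ X) ≫ f) := by
        rw [partialTrace_eq_braidedTrace, ← hf]; simp only [Category.assoc]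
    _ = braidedTrace ((β_ U V).hom ▷ X ≫ (α_ V U X).hom ≫ V ◁ ((θ U ⊗ₘ θ X) ≫ f) ≫ g) :=
        braidedTrace_cyclic _ _
    _ = braidedTrace ((U ⊗ V) ◁ θ X ≫ ((θ U ▷ V ≫ (β_ U V).hom) ▷ X) ≫ (α_ V U X).hom ≫
          V ◁ f ≫ g) := by
        congr 1
        rw [whisker_exchange_assoc, braiding_naturality_left, MonoidalCategory.tensorHom_def]
        monoidal
    _ = _ := by
        rw [partialTrace_eq_braidedTrace, braidedTrace_comp_comm _ (θ X)]

/-- Partial traces in a ribbon category are cyclic up to braidings and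
twists: for `f : U ⊗ X ⟶ Y` and `g : V ⊗ Y ⟶ X`,
`tr₃(f ∘ (id_U ⊗ g)) = tr₃(g ∘ (id_V ⊗ f) ∘ ((c_{U,V} ∘ (θ_U ⊗ id_V)) ⊗ id_X))`. -/
theorem partialTrace_cyclic (θ : ∀ X : C, X ⟶ X)
    (hθiso : ∀ X, IsIso (θ X))
    (hθnat : ∀ {X Y : C} (g : X ⟶ Y), g ≫ θ Y = θ X ≫ g)
    (hθone : θ (𝟙_ C) = 𝟙 (𝟙_ C))
    (hθtensor : ∀ X Y : C, θ (X ⊗ Y) = (β_ X Y).hom ≫ (β_ Y X).hom ≫ (θ X ⊗ₘ θ Y))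
    (hθdual : ∀ X : C, θ (Xᘁ) = (θ X)ᘁ)
    (U V X Y : C) (f : U ⊗ X ⟶ Y) (g : V ⊗ Y ⟶ X) :
    partialTrace θ ((α_ U V Y).hom ≫ (U ◁ g) ≫ f) =
    partialTrace θ ((((θ U ▷ V) ≫ (β_ U V).hom) ▷ X) ≫ (α_ V U X).hom ≫ (V ◁ f) ≫ g) :=
  partialTrace_cyclic_general θ hθnat hθtensor U V X Y f g
end
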